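/- Let f be a closure operator on a finite set E. The augmented Bergman complex Δ̂(f) is shellable if and only if it admits a shelling order in which all facets corresponding to maximal flags of proper flats appear first and all facets corresponding to bases appear last (a flag-to-basis shelling). -/

import Mathlib

open Finset

/-! ## Simplicial complexes as downward-relevant families of finite faces -/

section Complexes

variable {V : Type*} {W : Type*}

/-- A facet of a complex (given by its set of faces) is a maximal face. -/
def IsFacet (Δ : Set (Finset V)) (s : Finset V) : Prop :=
  s ∈ Δ ∧ ∀ t ∈ Δ, s ⊆ t → s = t

/-- The deletion of a vertex `v`: all faces not containing `v`. -/
def faceDeletion (Δ : Set (Finset V)) (v : V) : Set (Finset V) :=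
  {s ∈ Δ | v ∉ s}

/-- The link of a vertex `v`: faces `τ \ {v}` for `v ∈ τ ∈ Δ`. -/
def faceLink [DecidableEq V] (Δ : Set (Finset V)) (v : V) : Set (Finset V) :=
  {s | v ∉ s ∧ insert v s ∈ Δ}

/-- Vertex decomposability: `Δ` is a simplex (the family of all subsets of one finite
set, including the case `{∅}`), or it has a vertex `v` whose deletion and link are vertex
decomposable and such that every facet of the deletion is a facet of `Δ`. -/
inductive IsVertexDecomposable [DecidableEq V] : Set (Finset V) → Prop
  | simplex (s : Finset V) : IsVertexDecomposable {t | t ⊆ s}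
  | step (Δ : Set (Finset V)) (v : V) :
      {v} ∈ Δ →
      IsVertexDecomposable (faceDeletion Δ v) →
      IsVertexDecomposable (faceLink Δ v) →
      (∀ s, IsFacet (faceDeletion Δ v) s → IsFacet Δ s) →
      IsVertexDecomposable Δ

/-- A family of faces is pure of dimension `d` if it is nonempty and all of its
maximal elements have cardinality `d + 1`. -/
def IsPureDim (Δ : Set (Finset V)) (d : ℤ) : Prop :=
  Δ.Nonempty ∧ ∀ s, IsFacet Δ s → (s.card : ℤ) = d + 1

/-- `l` is a shelling order of `Δ`: it enumerates the facets of `Δ` without repetition,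
and for every `i ≥ 1` the complex `⟨σ₀, …, σ_{i-1}⟩ ∩ ⟨σ_i⟩` is pure of dimension
`dim σ_i - 1 = |σ_i| - 2`. -/
def IsShelling (Δ : Set (Finset V)) (l : List (Finset V)) : Prop :=
  l.Nodup ∧ (∀ s, s ∈ l ↔ IsFacet Δ s) ∧
  ∀ (i : ℕ) (hi : i < l.length), 0 < i →
    IsPureDim ({t | ∃ s ∈ l.take i, t ⊆ s} ∩ {t | t ⊆ l[i]})
      ((l[i].card : ℤ) - 2)

/-- A complex is shellable if it admits a shelling order of its facets. -/
def Shellable (Δ : Set (Finset V)) : Prop := ∃ l, IsShelling Δ l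

/-- The join of two complexes, realized on the sum of the two vertex types. -/
def complexJoin [DecidableEq V] [DecidableEq W]
    (Δ : Set (Finset V)) (Γ : Set (Finset W)) : Set (Finset (V ⊕ W)) :=
  {s | ∃ a ∈ Δ, ∃ b ∈ Γ, s = a.image Sum.inl ∪ b.image Sum.inr}

/-- An isomorphism of simplicial complexes: a vertex map which is injective on every
face and induces a bijection between the two families of faces. -/
def ComplexIso [DecidableEq W] (Δ : Set (Finset V)) (Γ : Set (Finset W)) : Prop :=
  ∃ φ : V → W,
    (∀ s ∈ Δ, Set.InjOn φ ↑s) ∧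
    (∀ s ∈ Δ, s.image φ ∈ Γ) ∧
    (∀ s t, s ∈ Δ → t ∈ Δ → s.image φ = t.image φ → s = t) ∧
    (∀ t ∈ Γ, ∃ s ∈ Δ, s.image φ = t)

/-- The property of appearing as an initial segment: any entry of `l` earlier than an
entry satisfying `P` also satisfies `P`. -/
def PrefixProp {α : Type*} (l : List α) (P : α → Prop) : Prop :=
  ∀ (i j : ℕ) (hi : i < l.length) (hj : j < l.length), i < j → P l[j] → P l[i]

/-- The property of appearing as a final segment: any entry of `l` later than an
entry satisfying `P` also satisfies `P`. -/
def SuffixProp {α : Type*} (l : List α) (P : α → Prop) : Prop :=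
  ∀ (i j : ℕ) (hi : i < l.length) (hj : j < l.length), i < j → P l[i] → P l[j]

/-- `a` appears strictly before `b` in the list `l`. -/
def ListPrec {α : Type*} (l : List α) (a b : α) : Prop :=
  ∃ (i j : ℕ) (hi : i < l.length) (hj : j < l.length), i < j ∧ l[i] = a ∧ l[j] = b

/-- The h-polynomial of a (finite) complex `Δ`, via
`h(Δ,t) = ∑_{s ∈ Δ} t^{|s|} (1-t)^{(d+1)-|s|}` where `d = dim Δ`. -/
noncomputable def hPoly {V : Type*} [Fintype V] [DecidableEq V]
    (Δ : Set (Finset V)) : Polynomial ℤ :=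
  ∑ s ∈ Δ.toFinite.toFinset,
    Polynomial.X ^ s.card *
      (1 - Polynomial.X) ^ (Δ.toFinite.toFinset.sup Finset.card - s.card)

end Complexes

/-! ## Closure operators -/

/-- A closure operator on the finite set `E`. -/
structure ClosureOp (E : Type*) [Fintype E] [DecidableEq E] where
  cl : Finset E → Finset E
  subset_cl : ∀ A, A ⊆ cl A
  cl_mono : ∀ ⦃A B : Finset E⦄, A ⊆ B → cl A ⊆ cl B
  cl_idem : ∀ A, cl (cl A) = cl A

namespace ClosureOp

variable {E : Type*} [Fintype E] [DecidableEq E]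

/-- A flat of `f` is a closed set. -/
def IsFlat (f : ClosureOp E) (F : Finset E) : Prop := f.cl F = F

/-- A proper flat of `f` is a flat different from the whole ground set. -/
def IsProperFlat (f : ClosureOp E) (F : Finset E) : Prop :=
  f.cl F = F ∧ F ≠ Finset.univ

/-- `I` is independent for `f` if removing any of its elements strictly shrinks its
closure. -/
def Indep (f : ClosureOp E) (I : Finset E) : Prop :=
  ∀ i ∈ I, f.cl (I.erase i) ⊂ f.cl I

/-- A basis is an independent set whose closure is all of `E`. -/
def IsBasis (f : ClosureOp E) (I : Finset E) : Prop :=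
  f.Indep I ∧ f.cl I = Finset.univ

/-- The independence complex of `f`: faces are the independent sets. -/
def indepComplex (f : ClosureOp E) : Set (Finset E) := {I | f.Indep I}

/-- The Bergman complex of `f`: faces are chains of proper flats strictly between
`f(∅)` and `E`. A vertex `x_F` is represented by the flat `F` itself. -/
def bergman (f : ClosureOp E) : Set (Finset (Finset E)) :=
  {C | (∀ F ∈ C, f.IsProperFlat F ∧ f.cl ∅ ⊂ F) ∧
       (∀ F ∈ C, ∀ G ∈ C, F ⊆ G ∨ G ⊆ F)}

/-- The cone over the Bergman complex of `f`: chains of proper flats, where the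
bottom flat `f(∅)` is allowed as a member. -/
def coneBergman (f : ClosureOp E) : Set (Finset (Finset E)) :=
  {C | (∀ F ∈ C, f.IsProperFlat F) ∧
       (∀ F ∈ C, ∀ G ∈ C, F ⊆ G ∨ G ⊆ F)}

/-- The augmented Bergman complex of `f`, on the vertex set
`{y_i : i ∈ E} ⊔ {x_F : F a proper flat}`; here `y_i = Sum.inl i` and
`x_F = Sum.inr F`.  Faces consist of an independent set `I` together with a chain of
proper flats all containing `f(I)`. -/
def augBergman (f : ClosureOp E) : Set (Finset (E ⊕ Finset E)) :=
  {s | ∃ (I : Finset E) (C : Finset (Finset E)),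
    s = I.image Sum.inl ∪ C.image Sum.inr ∧
    f.Indep I ∧
    (∀ F ∈ C, f.IsProperFlat F) ∧
    (∀ F ∈ C, ∀ G ∈ C, F ⊆ G ∨ G ⊆ F) ∧
    (∀ F ∈ C, f.cl I ⊆ F)}

/-- An upper-set of proper flats of `f`. -/
def IsFlatUpperSet (f : ClosureOp E) (L : Set (Finset E)) : Prop :=
  (∀ F ∈ L, f.IsProperFlat F) ∧
  ∀ F ∈ L, ∀ F', f.IsProperFlat F' → F ⊆ F' → F' ∈ L

/-- The induced subcomplex of the augmented Bergman complex on the vertex set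
`{y_i : i ∈ E} ⊔ {x_F : F ∈ L}`. -/
def augBergmanOn (f : ClosureOp E) (L : Set (Finset E)) :
    Set (Finset (E ⊕ Finset E)) :=
  {s | s ∈ f.augBergman ∧ ∀ F : Finset E, Sum.inr F ∈ s → F ∈ L}

/-- The restriction `f|_F` of a closure operator to `F`, as a closure operator on the
subtype `{x // x ∈ F}`; when `F` is a flat, `(f|_F)(A) = f(A)`. -/
def restrict (f : ClosureOp E) (F : Finset E) : ClosureOp {x // x ∈ F} where
  cl A := (f.cl (A.image Subtype.val)).subtype (· ∈ F)
  subset_cl A a ha := by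
    rw [Finset.mem_subtype]
    exact f.subset_cl _ (Finset.mem_image_of_mem _ ha)
  cl_mono A B h a ha := by
    rw [Finset.mem_subtype] at *
    exact f.cl_mono (Finset.image_subset_image h) ha
  cl_idem A := by
    have key : ∀ s : Finset E,
        ((s.subtype (· ∈ F)).image Subtype.val) = s.filter (· ∈ F) := by
      intro s
      ext x
      simp [Finset.mem_subtype, Finset.mem_image, Finset.mem_filter, Subtype.exists,
        and_comm]
    ext a
    rw [Finset.mem_subtype, Finset.mem_subtype, key]
    constructor
    · intro hx
      have h1 : f.cl ((f.cl (A.image Subtype.val)).filter (· ∈ F))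
          ⊆ f.cl (A.image Subtype.val) := by
        have := f.cl_mono (Finset.filter_subset (· ∈ F) (f.cl (A.image Subtype.val)))
        rw [f.cl_idem] at this
        exact this
      exact h1 hx
    · intro hx
      refine f.cl_mono ?_ hx
      intro x hxA
      rw [Finset.mem_filter]
      obtain ⟨a', _, rfl⟩ := Finset.mem_image.mp hxA
      exact ⟨f.subset_cl _ hxA, a'.2⟩

/-- The contraction `f/F` of a closure operator by `F`, as a closure operator on the
subtype `{x // x ∉ F}`; it is given by `(f/F)(A) = f(A ∪ F) \ F`. -/
def contract (f : ClosureOp E) (F : Finset E) : ClosureOp {x // x ∉ F} where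
  cl A := (f.cl (A.image Subtype.val ∪ F)).subtype (· ∉ F)
  subset_cl A a ha := by
    rw [Finset.mem_subtype]
    exact f.subset_cl _ (Finset.mem_union_left _ (Finset.mem_image_of_mem _ ha))
  cl_mono A B h a ha := by
    rw [Finset.mem_subtype] at *
    exact f.cl_mono (Finset.union_subset_union_left (Finset.image_subset_image h)) ha
  cl_idem A := by
    have key : ∀ s : Finset E,
        ((s.subtype (· ∉ F)).image Subtype.val) = s.filter (· ∉ F) := by
      intro s
      ext x
      simp [Finset.mem_subtype, Finset.mem_image, Finset.mem_filter, Subtype.exists,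
        and_comm]
    set s := f.cl (A.image Subtype.val ∪ F) with hs
    have hFs : F ⊆ s := fun x hx => f.subset_cl _ (Finset.mem_union_right _ hx)
    have hmain : f.cl ((s.subtype (· ∉ F)).image Subtype.val ∪ F) = s := by
      rw [key]
      apply le_antisymm
      · have h1 : s.filter (· ∉ F) ∪ F ⊆ s :=
          Finset.union_subset (Finset.filter_subset _ _) hFs
        have := f.cl_mono h1
        rw [hs, f.cl_idem] at this
        exact this
      · refine f.cl_mono ?_
        intro x hx
        rcases Finset.mem_union.mp hx with hx' | hx'
        · obtain ⟨a', _, rfl⟩ := Finset.mem_image.mp hx'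
          by_cases hxF : (a' : E) ∈ F
          · exact Finset.mem_union_right _ hxF
          · exact Finset.mem_union_left _
              (Finset.mem_filter.mpr ⟨f.subset_cl _ (Finset.mem_union_left _ hx'), hxF⟩)
        · exact Finset.mem_union_right _ hx'
    ext a
    rw [Finset.mem_subtype, Finset.mem_subtype, hmain]

end ClosureOp

/-! ## Matroids and their closure operators -/

/-- The closure operator (on finsets) of a matroid whose ground set is all of the
finite type `E`. -/
noncomputable def Matroid.closureOp {E : Type*} [Fintype E] [DecidableEq E]
    (M : Matroid E) (hE : M.E = Set.univ) : ClosureOp E where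
  cl A := (M.closure ↑A).toFinite.toFinset
  subset_cl A := by
    intro a ha
    simp only [Set.Finite.mem_toFinset]
    exact M.subset_closure (↑A) (by simp [hE]) ha
  cl_mono A B h := by
    intro a ha
    simp only [Set.Finite.mem_toFinset] at *
    exact M.closure_subset_closure (Finset.coe_subset.mpr h) ha
  cl_idem A := by
    ext a
    simp only [Set.Finite.mem_toFinset, Set.Finite.coe_toFinset]
    rw [M.closure_closure]

/-! ## The flag-to-basis order on facets of the augmented Bergman complex -/

namespace ClosureOp

variable {E : Type*} [Fintype E] [DecidableEq E]

/-- The independent-set part `I` of a face of the augmented Bergman complex. -/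
noncomputable def faceIndep (s : Finset (E ⊕ Finset E)) : Finset E :=
  s.preimage Sum.inl Sum.inl_injective.injOn

/-- The flag part `F_•` of a face of the augmented Bergman complex. -/
noncomputable def faceFlag (s : Finset (E ⊕ Finset E)) : Finset (Finset E) :=
  s.preimage Sum.inr Sum.inr_injective.injOn

/-- The flag part of a facet with its minimal flat `f(I)` removed, regarded as a face
of the Bergman complex of the contraction `f / f(I)`: each flat `G` of the flag is
sent to the flat `G \ f(I)` of the contraction. -/
noncomputable def reducedFlag (f : ClosureOp E) (s : Finset (E ⊕ Finset E)) : Finset (Finset E) :=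
  ((faceFlag s).erase (f.cl (faceIndep s))).image (fun G => G \ f.cl (faceIndep s))

/-- The flag-to-basis order `≺` on facets of the augmented Bergman complex, relative
to a linear extension `r` of the independence complex and a fixed family `sh` of
shellings of the Bergman complexes of the contractions `f/F`.  Facets with nonempty
flag are compared first by `r` on their independent parts, then (for equal independent
parts) by the position of their reduced flags in the fixed shelling `sh (f.cl I)`
(whose faces are mapped down to `Finset E` level by taking images of `Subtype.val`);
facets with empty flag (bases) come after all facets with nonempty flag. -/
def augPrec (f : ClosureOp E) (r : Finset E → Finset E → Prop)
    (sh : (F : Finset E) → List (Finset (Finset {x // x ∉ F})))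
    (s t : Finset (E ⊕ Finset E)) : Prop :=
  ((faceFlag s).Nonempty ∧ (faceFlag t).Nonempty ∧
    (r (faceIndep s) (faceIndep t) ∨
      (faceIndep s = faceIndep t ∧
        ListPrec ((sh (f.cl (faceIndep s))).map
            (fun c => c.image (fun G => G.image Subtype.val)))
          (f.reducedFlag s) (f.reducedFlag t)))) ∨
  ((faceFlag s).Nonempty ∧ faceFlag t = ∅)

end ClosureOp
namespace ClosureOp

variable {E : Type*} [Fintype E] [DecidableEq E]

set_option linter.unusedSectionVars false

/-- Recombine an independent part and a flag part into a face. -/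
def con (I : Finset E) (C : Finset (Finset E)) : Finset (E ⊕ Finset E) :=
  I.image Sum.inl ∪ C.image Sum.inr

@[simp] lemma mem_con_inl {I : Finset E} {C : Finset (Finset E)} {a : E} :
    Sum.inl a ∈ con I C ↔ a ∈ I := by
  simp [con]

@[simp] lemma mem_con_inr {I : Finset E} {C : Finset (Finset E)} {F : Finset E} :
    Sum.inr F ∈ con I C ↔ F ∈ C := by
  simp [con]

@[simp] lemma faceIndep_con (I : Finset E) (C : Finset (Finset E)) :
    faceIndep (con I C) = I := by
  ext a; simp [faceIndep, Finset.mem_preimage]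

@[simp] lemma faceFlag_con (I : Finset E) (C : Finset (Finset E)) :
    faceFlag (con I C) = C := by
  ext F; simp [faceFlag, Finset.mem_preimage]

lemma con_decomp (s : Finset (E ⊕ Finset E)) : con (faceIndep s) (faceFlag s) = s := by
  ext v
  cases v with
  | inl a => simp [faceIndep, Finset.mem_preimage]
  | inr F => simp [faceFlag, Finset.mem_preimage]

lemma con_subset_con {I I' : Finset E} {C C' : Finset (Finset E)} :
    con I C ⊆ con I' C' ↔ I ⊆ I' ∧ C ⊆ C' := by
  constructor
  · intro h
    constructor
    · intro a ha; simpa using h (mem_con_inl.mpr ha)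
    · intro F hF; simpa using h (mem_con_inr.mpr hF)
  · rintro ⟨h1, h2⟩ v hv
    cases v with
    | inl a => exact mem_con_inl.mpr (h1 (mem_con_inl.mp hv))
    | inr F => exact mem_con_inr.mpr (h2 (mem_con_inr.mp hv))

lemma subset_iff_con (s t : Finset (E ⊕ Finset E)) :
    s ⊆ t ↔ faceIndep s ⊆ faceIndep t ∧ faceFlag s ⊆ faceFlag t := by
  rw [← con_subset_con, con_decomp, con_decomp]

lemma card_con (I : Finset E) (C : Finset (Finset E)) :
    (con I C).card = I.card + C.card := by
  rw [con, Finset.card_union_of_disjoint, Finset.card_image_of_injective _ Sum.inl_injective,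
    Finset.card_image_of_injective _ Sum.inr_injective]
  simp [Finset.disjoint_left]

lemma con_inj {I I' : Finset E} {C C' : Finset (Finset E)}
    (h : con I C = con I' C') : I = I' ∧ C = C' := by
  constructor
  · have := congrArg faceIndep h; simpa using this
  · have := congrArg faceFlag h; simpa using this

lemma mem_augBergman_iff {f : ClosureOp E} {s : Finset (E ⊕ Finset E)} :
    s ∈ f.augBergman ↔
      f.Indep (faceIndep s) ∧ (∀ F ∈ faceFlag s, f.IsProperFlat F) ∧
      (∀ F ∈ faceFlag s, ∀ G ∈ faceFlag s, F ⊆ G ∨ G ⊆ F) ∧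
      (∀ F ∈ faceFlag s, f.cl (faceIndep s) ⊆ F) := by
  constructor
  · rintro ⟨I, C, rfl, h1, h2, h3, h4⟩
    have : con I C = I.image Sum.inl ∪ C.image Sum.inr := rfl
    rw [← this, faceIndep_con, faceFlag_con]
    exact ⟨h1, h2, h3, h4⟩
  · rintro ⟨h1, h2, h3, h4⟩
    exact ⟨faceIndep s, faceFlag s, (con_decomp s).symm, h1, h2, h3, h4⟩

lemma con_mem_augBergman_iff {f : ClosureOp E} {I : Finset E} {C : Finset (Finset E)} :
    con I C ∈ f.augBergman ↔
      f.Indep I ∧ (∀ F ∈ C, f.IsProperFlat F) ∧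
      (∀ F ∈ C, ∀ G ∈ C, F ⊆ G ∨ G ⊆ F) ∧ (∀ F ∈ C, f.cl I ⊆ F) := by
  rw [mem_augBergman_iff, faceIndep_con, faceFlag_con]

/-! ### Independence -/

variable {f : ClosureOp E}

lemma indep_iff_not_mem_cl {I : Finset E} :
    f.Indep I ↔ ∀ i ∈ I, i ∉ f.cl (I.erase i) := by
  constructor
  · intro h i hi hmem
    have h1 := h i hi
    have h2 : f.cl I ⊆ f.cl (I.erase i) := by
      have : I ⊆ f.cl (I.erase i) := by
        intro j hj
        by_cases hji : j = i
        · subst hji; exact hmem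
        · exact f.subset_cl _ (Finset.mem_erase.mpr ⟨hji, hj⟩)
      calc f.cl I ⊆ f.cl (f.cl (I.erase i)) := f.cl_mono this
        _ = f.cl (I.erase i) := f.cl_idem _
    exact (h1.not_subset h2).elim
  · intro h i hi
    refine ⟨f.cl_mono (Finset.erase_subset _ _), fun hsub => ?_⟩
    exact h i hi (hsub (f.subset_cl _ hi))

lemma Indep.subset {I J : Finset E} (hI : f.Indep I) (hJI : J ⊆ I) : f.Indep J := by
  rw [indep_iff_not_mem_cl] at *
  intro j hj hmem
  exact hI j (hJI hj) (f.cl_mono (fun x hx => Finset.mem_erase.mpr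
    ⟨(Finset.mem_erase.mp hx).1, hJI (Finset.mem_erase.mp hx).2⟩) hmem)

lemma indep_empty : f.Indep (∅ : Finset E) := fun i hi => absurd hi (by simp)

lemma cl_ssubset_of_ssubset {I J : Finset E} (hJ : f.Indep J) (h : I ⊂ J) :
    f.cl I ⊂ f.cl J := by
  obtain ⟨j, hjJ, hjI⟩ := Finset.exists_of_ssubset h
  have h1 : I ⊆ J.erase j := fun x hx => Finset.mem_erase.mpr
    ⟨fun hxj => hjI (hxj ▸ hx), h.1 hx⟩
  exact lt_of_le_of_lt (f.cl_mono h1) (hJ j hjJ)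

lemma indep_eq_empty_of_cl {I : Finset E} (hI : f.Indep I) (h : f.cl I = f.cl ∅) :
    I = ∅ := by
  by_contra hne
  have h2 : (∅ : Finset E) ⊂ I := Finset.empty_ssubset.mpr (Finset.nonempty_of_ne_empty hne)
  have := cl_ssubset_of_ssubset hI h2
  rw [h] at this
  exact this.2 (le_refl _)

lemma isFlat_cl (f : ClosureOp E) (A : Finset E) : f.IsFlat (f.cl A) := f.cl_idem A

end ClosureOp
lemma Finset.exists_maximal_old {α : Type*} [Preorder α] (s : Finset α) (h : s.Nonempty) :
    ∃ m ∈ s, ∀ x ∈ s, ¬m < x := by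
  obtain ⟨m, hm⟩ := Finset.exists_maximal h
  exact ⟨m, hm.prop, fun x hx hlt => lt_irrefl _ (lt_of_lt_of_le hlt (hm.2 hx hlt.le))⟩

lemma Finset.exists_minimal_old {α : Type*} [Preorder α] (s : Finset α) (h : s.Nonempty) :
    ∃ m ∈ s, ∀ x ∈ s, ¬x < m := by
  obtain ⟨m, hm⟩ := Finset.exists_minimal h
  exact ⟨m, hm.prop, fun x hx hlt => lt_irrefl _ (lt_of_lt_of_le hlt (hm.2 hx hlt.le))⟩

section FacetGeneral

variable {V : Type*} [Fintype V] [DecidableEq V]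

lemma exists_facet_superset {Δ : Set (Finset V)} {s : Finset V} (hs : s ∈ Δ) :
    ∃ t, IsFacet Δ t ∧ s ⊆ t := by
  classical
  obtain ⟨m, hm, hmax⟩ := Finset.exists_maximal_old
    ((Finset.univ.powerset).filter (fun t => t ∈ Δ ∧ s ⊆ t)) ⟨s, by simp [hs]⟩
  rw [Finset.mem_filter] at hm
  refine ⟨m, ⟨hm.2.1, ?_⟩, hm.2.2⟩
  intro u hu hsub
  by_contra hne
  exact hmax u (Finset.mem_filter.mpr ⟨by simp, hu, hm.2.2.trans hsub⟩)
    (lt_of_le_of_ne hsub hne)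

end FacetGeneral

namespace ClosureOp

variable {E : Type*} [Fintype E] [DecidableEq E] {f : ClosureOp E}

set_option linter.unusedSectionVars false

lemma chain_insert {C : Finset (Finset E)} {X : Finset E}
    (hchain : ∀ F ∈ C, ∀ G ∈ C, F ⊆ G ∨ G ⊆ F)
    (hX : ∀ F ∈ C, X ⊆ F ∨ F ⊆ X) :
    ∀ F ∈ insert X C, ∀ G ∈ insert X C, F ⊆ G ∨ G ⊆ F := by
  intro F hF G hG
  rcases Finset.mem_insert.mp hF with hFX | hF
  · rcases Finset.mem_insert.mp hG with hGX | hG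
    · rw [hFX, hGX]; left; exact Finset.Subset.refl _
    · rw [hFX]; exact hX G hG
  · rcases Finset.mem_insert.mp hG with hGX | hG
    · rw [hGX]; exact (hX F hF).symm
    · exact hchain F hF G hG

lemma not_insert_of_facet {s : Finset (E ⊕ Finset E)} (hs : IsFacet f.augBergman s)
    {v : E ⊕ Finset E} (hv : v ∉ s) (h : insert v s ∈ f.augBergman) : False := by
  have := hs.2 _ h (Finset.subset_insert _ _)
  exact hv (this ▸ Finset.mem_insert_self v s)

lemma cl_subset_flag {s : Finset (E ⊕ Finset E)} (hs : s ∈ f.augBergman)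
    {F : Finset E} (hF : F ∈ faceFlag s) : f.cl (faceIndep s) ⊆ F :=
  (mem_augBergman_iff.mp hs).2.2.2 F hF

lemma cl_mem_flag_of_facet {s : Finset (E ⊕ Finset E)} (hs : IsFacet f.augBergman s)
    (hne : (faceFlag s).Nonempty) : f.cl (faceIndep s) ∈ faceFlag s := by
  by_contra hmem
  obtain ⟨h1, h2, h3, h4⟩ := mem_augBergman_iff.mp hs.1
  obtain ⟨F0, hF0⟩ := hne
  have hproper : f.IsProperFlat (f.cl (faceIndep s)) := by
    refine ⟨f.cl_idem _, fun hu => ?_⟩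
    have := h4 F0 hF0
    rw [hu] at this
    exact (h2 F0 hF0).2 (Finset.univ_subset_iff.mp this)
  have : insert (Sum.inr (f.cl (faceIndep s))) s ∈ f.augBergman := by
    rw [show insert (Sum.inr (f.cl (faceIndep s))) s
        = con (faceIndep s) (insert (f.cl (faceIndep s)) (faceFlag s)) by
      rw [← con_decomp s]; ext v; cases v <;> simp]
    rw [con_mem_augBergman_iff]
    refine ⟨h1, ?_, ?_, ?_⟩
    · intro F hF
      rcases Finset.mem_insert.mp hF with rfl | hF
      · exact hproper
      · exact h2 F hF
    · exact chain_insert h3 (fun F hF => Or.inl (h4 F hF))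
    · intro F hF
      rcases Finset.mem_insert.mp hF with rfl | hF
      · exact Finset.Subset.refl _
      · exact h4 F hF
  exact not_insert_of_facet hs (by simpa [faceFlag, Finset.mem_preimage] using hmem) this

lemma cl_eq_univ_of_facet_flag_empty {s : Finset (E ⊕ Finset E)}
    (hs : IsFacet f.augBergman s) (hflag : faceFlag s = ∅) :
    f.cl (faceIndep s) = Finset.univ := by
  by_contra hne
  obtain ⟨h1, h2, h3, h4⟩ := mem_augBergman_iff.mp hs.1
  have : insert (Sum.inr (f.cl (faceIndep s))) s ∈ f.augBergman := by
    rw [show insert (Sum.inr (f.cl (faceIndep s))) s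
        = con (faceIndep s) (insert (f.cl (faceIndep s)) (faceFlag s)) by
      rw [← con_decomp s]; ext v; cases v <;> simp]
    rw [con_mem_augBergman_iff, hflag]
    refine ⟨h1, ?_, ?_, ?_⟩
    · intro F hF
      rcases Finset.mem_insert.mp hF with rfl | hF
      · exact ⟨f.cl_idem _, hne⟩
      · simp at hF
    · exact chain_insert (by simp) (by simp)
    · intro F hF
      rcases Finset.mem_insert.mp hF with rfl | hF
      · exact Finset.Subset.refl _
      · simp at hF
  refine not_insert_of_facet hs ?_ this
  simp only [faceFlag] at hflag
  intro hmem
  have : f.cl (faceIndep s) ∈ s.preimage Sum.inr Sum.inr_injective.injOn :=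
    Finset.mem_preimage.mpr hmem
  rw [hflag] at this
  simp at this

lemma flag_max_of_facet {s : Finset (E ⊕ Finset E)} (hs : IsFacet f.augBergman s)
    {G : Finset E} (hG : f.IsProperFlat G) (hsub : f.cl (faceIndep s) ⊆ G)
    (hcomp : ∀ H ∈ faceFlag s, G ⊆ H ∨ H ⊆ G) : G ∈ faceFlag s := by
  by_contra hmem
  obtain ⟨h1, h2, h3, h4⟩ := mem_augBergman_iff.mp hs.1
  have : insert (Sum.inr G) s ∈ f.augBergman := by
    rw [show insert (Sum.inr G) s = con (faceIndep s) (insert G (faceFlag s)) by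
      rw [← con_decomp s]; ext v; cases v <;> simp]
    rw [con_mem_augBergman_iff]
    refine ⟨h1, ?_, ?_, ?_⟩
    · intro F hF
      rcases Finset.mem_insert.mp hF with rfl | hF
      · exact hG
      · exact h2 F hF
    · exact chain_insert h3 hcomp
    · intro F hF
      rcases Finset.mem_insert.mp hF with rfl | hF
      · exact hsub
      · exact h4 F hF
  exact not_insert_of_facet hs (by simpa [faceFlag, Finset.mem_preimage] using hmem) this

/-- Building facets with nonempty flag part. -/
lemma isFacet_con_of_max_chain {I : Finset E} {C : Finset (Finset E)}
    (hI : f.Indep I) (hclC : f.cl I ∈ C)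
    (hproper : ∀ F ∈ C, f.IsProperFlat F)
    (hchain : ∀ F ∈ C, ∀ G ∈ C, F ⊆ G ∨ G ⊆ F)
    (hsub : ∀ F ∈ C, f.cl I ⊆ F)
    (hmax : ∀ G, f.IsProperFlat G → f.cl I ⊆ G →
      (∀ H ∈ C, G ⊆ H ∨ H ⊆ G) → G ∈ C) :
    IsFacet f.augBergman (con I C) := by
  have hmem : con I C ∈ f.augBergman :=
    con_mem_augBergman_iff.mpr ⟨hI, hproper, hchain, hsub⟩
  refine ⟨hmem, fun t ht hsubt => ?_⟩
  obtain ⟨g1, g2, g3, g4⟩ := mem_augBergman_iff.mp ht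
  rw [subset_iff_con, faceIndep_con, faceFlag_con] at hsubt
  have hIeq : faceIndep t = I := by
    apply Finset.Subset.antisymm _ hsubt.1
    intro j hj
    by_contra hjI
    have hins : f.Indep (insert j I) :=
      g1.subset (Finset.insert_subset hj hsubt.1)
    have h5 : f.cl (insert j I) ⊆ f.cl I := by
      have := g4 (f.cl I) (hsubt.2 hclC)
      exact (f.cl_mono (Finset.insert_subset hj hsubt.1)).trans this
    have h6 : f.cl I ⊂ f.cl (insert j I) :=
      cl_ssubset_of_ssubset hins (Finset.ssubset_insert hjI)
    exact h6.2 h5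
  have hCeq : faceFlag t = C := by
    apply Finset.Subset.antisymm _ hsubt.2
    intro G hG
    refine hmax G (g2 G hG) ?_ ?_
    · rw [← hIeq]; exact g4 G hG
    · intro H hH
      exact g3 G hG H (hsubt.2 hH)
  rw [← con_decomp t, hIeq, hCeq]

lemma isFacet_basis {I : Finset E} (hI : f.Indep I) (hcl : f.cl I = Finset.univ) :
    IsFacet f.augBergman (con I ∅) := by
  have hmem : con I ∅ ∈ f.augBergman :=
    con_mem_augBergman_iff.mpr ⟨hI, by simp, by simp, by simp⟩
  refine ⟨hmem, fun t ht hsubt => ?_⟩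
  obtain ⟨g1, g2, g3, g4⟩ := mem_augBergman_iff.mp ht
  rw [subset_iff_con, faceIndep_con, faceFlag_con] at hsubt
  have hCeq : faceFlag t = ∅ := by
    rw [Finset.eq_empty_iff_forall_notMem]
    intro G hG
    have h5 : f.cl (faceIndep t) ⊆ G := g4 G hG
    have h6 : f.cl I ⊆ f.cl (faceIndep t) := f.cl_mono hsubt.1
    exact (g2 G hG).2 (Finset.univ_subset_iff.mp ((hcl ▸ h6).trans h5))
  have hIeq : faceIndep t = I := by
    apply Finset.Subset.antisymm _ hsubt.1
    intro j hj
    by_contra hjI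
    have hins : f.Indep (insert j I) := g1.subset (Finset.insert_subset hj hsubt.1)
    have h6 : f.cl I ⊂ f.cl (insert j I) :=
      cl_ssubset_of_ssubset hins (Finset.ssubset_insert hjI)
    have : f.cl (insert j I) ⊆ f.cl I := by
      rw [hcl]; exact Finset.subset_univ _
    exact h6.2 this
  rw [← con_decomp t, hIeq, hCeq]

/-- Facets above `(I, {F})`, where `cl I = F`, have independent part exactly `I`. -/
lemma faceIndep_eq_of_facet_above {τ : Finset (E ⊕ Finset E)}
    (hτ : IsFacet f.augBergman τ) {I F : Finset E} (hI : f.Indep I)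
    (hcl : f.cl I = F) (hsub : con I {F} ⊆ τ) : faceIndep τ = I := by
  obtain ⟨g1, g2, g3, g4⟩ := mem_augBergman_iff.mp hτ.1
  rw [subset_iff_con, faceIndep_con, faceFlag_con] at hsub
  refine Finset.Subset.antisymm ?_ hsub.1
  intro j hj
  by_contra hjI
  have hins : f.Indep (insert j I) := g1.subset (Finset.insert_subset hj hsub.1)
  have h5 : f.cl (insert j I) ⊆ F := by
    have := g4 F (hsub.2 (Finset.mem_singleton_self F))
    exact (f.cl_mono (Finset.insert_subset hj hsub.1)).trans this
  have h6 : f.cl I ⊂ f.cl (insert j I) :=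
    cl_ssubset_of_ssubset hins (Finset.ssubset_insert hjI)
  rw [hcl] at h6
  exact h6.2 h5

/-- Swap the independent part of a facet for another one with the same closure. -/
lemma isFacet_swap {I I' : Finset E} {C : Finset (Finset E)}
    (hfac : IsFacet f.augBergman (con I C)) (hne : C.Nonempty)
    (hI' : f.Indep I') (hcl : f.cl I' = f.cl I) :
    IsFacet f.augBergman (con I' C) := by
  obtain ⟨g1, g2, g3, g4⟩ := mem_augBergman_iff.mp hfac.1
  rw [faceIndep_con, faceFlag_con] at *
  have hclC : f.cl I ∈ C := by
    have := cl_mem_flag_of_facet hfac (by rwa [faceFlag_con])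
    rwa [faceIndep_con, faceFlag_con] at this
  refine isFacet_con_of_max_chain hI' (hcl ▸ hclC) g2 g3 (fun F hF => hcl ▸ g4 F hF) ?_
  intro G hG hsubG hcomp
  have := flag_max_of_facet hfac hG (by rwa [faceIndep_con, ← hcl])
    (by rwa [faceFlag_con])
  rwa [faceFlag_con] at this

end ClosureOp
/-! ### list helpers -/

lemma indexOf_getElem_le {α} [DecidableEq α] :
    ∀ (l : List α) (j : ℕ) (hj : j < l.length), l.idxOf l[j] ≤ j
  | a :: tl, 0, _ => by simp
  | a :: tl, j+1, hj => by
    have hget : (a::tl)[j+1] = tl[j]'(by simpa using hj) := rfl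
    by_cases h : tl[j]'(by simpa using hj) = a
    · rw [hget, h]; simp
    · rw [hget, List.idxOf_cons_ne _ (Ne.symm h)]
      exact Nat.succ_le_succ (indexOf_getElem_le tl j (by simpa using hj))

lemma mem_take_iff' {α} {l : List α} {i : ℕ} {a : α} (hi : i ≤ l.length) :
    a ∈ l.take i ↔ ∃ j, ∃ hj : j < l.length, j < i ∧ l[j] = a := by
  rw [List.mem_take_iff_getElem]
  constructor
  · rintro ⟨j, hm, rfl⟩
    exact ⟨j, by omega, by omega, rfl⟩
  · rintro ⟨j, hj, hji, rfl⟩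
    exact ⟨j, by omega, rfl⟩

/-! ### pickIndep -/

namespace ClosureOp

variable {E : Type*} [Fintype E] [DecidableEq E] {f : ClosureOp E}

set_option linter.unusedSectionVars false

noncomputable def pickIndep (f : ClosureOp E) (F : Finset E) : Finset E :=
  if h : (F.powerset.filter (fun J => f.cl J = F)).Nonempty then
    (Finset.exists_minimal_old _ h).choose else ∅

lemma pickIndep_spec (hF : f.cl F = F) :
    f.cl (f.pickIndep F) = F ∧
      ∀ J ∈ F.powerset.filter (fun J => f.cl J = F), ¬J ⊂ f.pickIndep F := by
  have hne : (F.powerset.filter (fun J => f.cl J = F)).Nonempty :=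
    ⟨F, Finset.mem_filter.mpr ⟨Finset.mem_powerset_self F, hF⟩⟩
  rw [pickIndep, dif_pos hne]
  obtain ⟨hm, hmin⟩ := (Finset.exists_minimal_old _ hne).choose_spec
  exact ⟨(Finset.mem_filter.mp hm).2, hmin⟩

lemma pickIndep_cl (hF : f.cl F = F) : f.cl (f.pickIndep F) = F := (pickIndep_spec hF).1

lemma pickIndep_subset (hF : f.cl F = F) : f.pickIndep F ⊆ F := by
  have := pickIndep_cl hF
  calc f.pickIndep F ⊆ f.cl (f.pickIndep F) := f.subset_cl _
    _ = F := this

lemma pickIndep_indep (hF : f.cl F = F) : f.Indep (f.pickIndep F) := by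
  obtain ⟨hcl, hmin⟩ := pickIndep_spec hF
  intro i hi
  refine ⟨f.cl_mono (Finset.erase_subset _ _), fun hsub => ?_⟩
  have heq : f.cl ((f.pickIndep F).erase i) = f.cl (f.pickIndep F) :=
    Finset.Subset.antisymm (f.cl_mono (Finset.erase_subset _ _)) hsub
  refine hmin ((f.pickIndep F).erase i) (Finset.mem_filter.mpr ⟨?_, ?_⟩)
    (Finset.erase_ssubset hi)
  · exact Finset.mem_powerset.mpr ((Finset.erase_subset _ _).trans (pickIndep_subset hF))
  · rw [heq, hcl]

lemma pickIndep_cl_empty : f.pickIndep (f.cl ∅) = ∅ := by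
  have hF : f.cl (f.cl ∅) = f.cl ∅ := f.cl_idem ∅
  obtain ⟨hcl, hmin⟩ := pickIndep_spec hF
  by_contra hne
  refine hmin ∅ (Finset.mem_filter.mpr ⟨by simp, rfl⟩) ?_
  exact Finset.empty_ssubset.mpr (Finset.nonempty_of_ne_empty hne)

/-! ### erase helpers -/

lemma faceIndep_erase_inl (s : Finset (E ⊕ Finset E)) (a : E) :
    faceIndep (s.erase (Sum.inl a)) = (faceIndep s).erase a := by
  ext x; simp [faceIndep, Finset.mem_preimage, and_comm]

lemma faceFlag_erase_inl (s : Finset (E ⊕ Finset E)) (a : E) :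
    faceFlag (s.erase (Sum.inl a)) = faceFlag s := by
  ext x; simp [faceFlag, Finset.mem_preimage]

lemma faceIndep_erase_inr (s : Finset (E ⊕ Finset E)) (G : Finset E) :
    faceIndep (s.erase (Sum.inr G)) = faceIndep s := by
  ext x; simp [faceIndep, Finset.mem_preimage]

lemma faceFlag_erase_inr (s : Finset (E ⊕ Finset E)) (G : Finset E) :
    faceFlag (s.erase (Sum.inr G)) = (faceFlag s).erase G := by
  ext x; simp [faceFlag, Finset.mem_preimage, and_comm]

/-! ### the key function -/

variable (f)

noncomputable def bigM (l : List (Finset (E ⊕ Finset E))) : ℕ :=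
  Fintype.card (Finset E) + Fintype.card E + l.length + 2

noncomputable def iotaI (I : Finset E) : ℕ :=
  (Finset.univ : Finset (Finset E)).toList.idxOf I

noncomputable def companion (s : Finset (E ⊕ Finset E)) : Finset (E ⊕ Finset E) :=
  con (f.pickIndep (f.cl (faceIndep s))) (faceFlag s)

noncomputable def idx2 (l : List (Finset (E ⊕ Finset E))) (s : Finset (E ⊕ Finset E)) : ℕ :=
  l.idxOf (f.companion s)

noncomputable def key (l : List (Finset (E ⊕ Finset E))) (s : Finset (E ⊕ Finset E)) : ℕ :=
  if faceFlag s = ∅ then (bigM l)^3 + iotaI (faceIndep s)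
  else (f.cl (faceIndep s)).card * (bigM l)^2 + iotaI (faceIndep s) * (bigM l)
    + f.idx2 l s

variable {f}
variable {l : List (Finset (E ⊕ Finset E))}

lemma iotaI_lt (I : Finset E) : iotaI I < Fintype.card (Finset E) := by
  have := List.idxOf_lt_length_iff.mpr
    (Finset.mem_toList.mpr (Finset.mem_univ I))
  rwa [Finset.length_toList, Finset.card_univ] at this

lemma iotaI_inj {I J : Finset E} (h : iotaI I = iotaI J) : I = J := by
  exact (List.idxOf_inj (Finset.mem_toList.mpr (Finset.mem_univ I))).mp h

lemma iotaI_lt_bigM (I : Finset E) : iotaI I < bigM l := by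
  have := iotaI_lt (E := E) I
  unfold bigM
  omega

lemma cardcl_lt_bigM (I : Finset E) : (f.cl I).card < bigM l := by
  have := Finset.card_le_univ (f.cl I)
  unfold bigM
  omega

lemma idx2_lt_bigM (s : Finset (E ⊕ Finset E)) : f.idx2 l s < bigM l := by
  have := List.idxOf_le_length (a := f.companion s) (l := l)
  unfold bigM idx2
  omega

lemma lex3_lt {M a b c a' b' c' : ℕ} (hb : b < M) (hc : c < M) (hb' : b' < M) (hc' : c' < M)
    (h : a < a' ∨ (a = a' ∧ (b < b' ∨ (b = b' ∧ c < c')))) :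
    a*M^2 + b*M + c < a'*M^2 + b'*M + c' := by
  rcases h with h | ⟨rfl, h | ⟨rfl, h⟩⟩
  · have h1 : a + 1 ≤ a' := h
    nlinarith
  · nlinarith
  · omega

lemma lex3_lt_iff {M a b c a' b' c' : ℕ} (hb : b < M) (hc : c < M) (hb' : b' < M) (hc' : c' < M) :
    a*M^2 + b*M + c < a'*M^2 + b'*M + c' ↔
      (a < a' ∨ (a = a' ∧ (b < b' ∨ (b = b' ∧ c < c')))) := by
  constructor
  · intro h
    rcases Nat.lt_trichotomy a a' with h1 | h1 | h1
    · exact Or.inl h1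
    · rcases Nat.lt_trichotomy b b' with h3 | h3 | h3
      · exact Or.inr ⟨h1, Or.inl h3⟩
      · rcases Nat.lt_trichotomy c c' with h6 | h6 | h6
        · exact Or.inr ⟨h1, Or.inr ⟨h3, h6⟩⟩
        · exfalso; subst h1; subst h3; subst h6; exact lt_irrefl _ h
        · exfalso
          have := lex3_lt hb' hc' hb hc (Or.inr ⟨h1.symm, Or.inr ⟨h3.symm, h6⟩⟩)
          omega
      · exfalso
        have := lex3_lt hb' hc' hb hc (Or.inr ⟨h1.symm, Or.inl h3⟩)
        omega
    · exfalso
      have := lex3_lt hb' hc' hb hc (Or.inl h1)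
      omega
  · exact lex3_lt hb hc hb' hc'

lemma key_nonbasis {s : Finset (E ⊕ Finset E)} (h : faceFlag s ≠ ∅) :
    f.key l s = (f.cl (faceIndep s)).card * (bigM l)^2 + iotaI (faceIndep s) * (bigM l)
      + f.idx2 l s := by
  rw [key, if_neg h]

lemma key_basis {s : Finset (E ⊕ Finset E)} (h : faceFlag s = ∅) :
    f.key l s = (bigM l)^3 + iotaI (faceIndep s) := by
  rw [key, if_pos h]

lemma key_nonbasis_lt_cube {s : Finset (E ⊕ Finset E)} (h : faceFlag s ≠ ∅) :
    f.key l s < (bigM l)^3 := by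
  rw [key_nonbasis h]
  obtain ⟨K, hK⟩ : ∃ K, bigM l = K + 2 := ⟨bigM l - 2, by unfold bigM; omega⟩
  have h1 : (f.cl (faceIndep s)).card ≤ K := by
    have := Finset.card_le_univ (f.cl (faceIndep s))
    unfold bigM at hK; omega
  have h2 : iotaI (faceIndep s) ≤ K + 1 := by
    have := iotaI_lt_bigM (l := l) (faceIndep s); omega
  have h3 : f.idx2 l s ≤ K + 1 := by
    have := idx2_lt_bigM (f := f) (l := l) s; omega
  rw [hK]
  have e1 : (f.cl (faceIndep s)).card * (K+2)^2 ≤ K * (K+2)^2 := mul_le_mul_left h1 _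
  have e2 : iotaI (faceIndep s) * (K+2) ≤ (K+1) * (K+2) := mul_le_mul_left h2 _
  nlinarith [e1, e2, h3]

lemma key_nonbasis_lt_basis {s t : Finset (E ⊕ Finset E)} (hs : faceFlag s ≠ ∅)
    (ht : faceFlag t = ∅) : f.key l s < f.key l t := by
  have := key_nonbasis_lt_cube (f := f) (l := l) hs
  rw [key_basis ht]
  omega

lemma key_lt_iff_nonbasis {s t : Finset (E ⊕ Finset E)} (hs : faceFlag s ≠ ∅)
    (ht : faceFlag t ≠ ∅) :
    f.key l s < f.key l t ↔
      ((f.cl (faceIndep s)).card < (f.cl (faceIndep t)).card ∨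
        ((f.cl (faceIndep s)).card = (f.cl (faceIndep t)).card ∧
          (iotaI (faceIndep s) < iotaI (faceIndep t) ∨
            (iotaI (faceIndep s) = iotaI (faceIndep t) ∧ f.idx2 l s < f.idx2 l t)))) := by
  rw [key_nonbasis hs, key_nonbasis ht]
  exact lex3_lt_iff (iotaI_lt_bigM _) (idx2_lt_bigM _) (iotaI_lt_bigM _) (idx2_lt_bigM _)

end ClosureOp
namespace ClosureOp

variable {E : Type*} [Fintype E] [DecidableEq E] {f : ClosureOp E}
variable {l : List (Finset (E ⊕ Finset E))}

set_option linter.unusedSectionVars false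

lemma mem_faceFlag {s : Finset (E ⊕ Finset E)} {F : Finset E} :
    F ∈ faceFlag s ↔ Sum.inr F ∈ s := by
  simp [faceFlag, Finset.mem_preimage]

lemma mem_faceIndep {s : Finset (E ⊕ Finset E)} {a : E} :
    a ∈ faceIndep s ↔ Sum.inl a ∈ s := by
  simp [faceIndep, Finset.mem_preimage]

lemma faceIndep_subset {s t : Finset (E ⊕ Finset E)} (h : s ⊆ t) :
    faceIndep s ⊆ faceIndep t := fun a ha => mem_faceIndep.mpr (h (mem_faceIndep.mp ha))

lemma faceFlag_subset {s t : Finset (E ⊕ Finset E)} (h : s ⊆ t) :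
    faceFlag s ⊆ faceFlag t := fun F hF => mem_faceFlag.mpr (h (mem_faceFlag.mp hF))

/-- The companion of a facet with nonempty flag part is a facet containing
`(pickIndep (cl I), {cl I})`. -/
lemma companion_isFacet {σ : Finset (E ⊕ Finset E)} (hσ : IsFacet f.augBergman σ)
    (hne : faceFlag σ ≠ ∅) : IsFacet f.augBergman (f.companion σ) := by
  have hclmem : f.cl (faceIndep σ) ∈ faceFlag σ :=
    cl_mem_flag_of_facet hσ (Finset.nonempty_of_ne_empty hne)
  have hflat : f.cl (f.cl (faceIndep σ)) = f.cl (faceIndep σ) := f.cl_idem _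
  have hfac : IsFacet f.augBergman (con (faceIndep σ) (faceFlag σ)) := by
    rwa [con_decomp]
  exact isFacet_swap hfac (Finset.nonempty_of_ne_empty hne)
    (pickIndep_indep hflat) (pickIndep_cl hflat)

lemma companion_contains {σ : Finset (E ⊕ Finset E)} (hσ : IsFacet f.augBergman σ)
    (hne : faceFlag σ ≠ ∅) :
    con (f.pickIndep (f.cl (faceIndep σ))) {f.cl (faceIndep σ)} ⊆ f.companion σ := by
  rw [companion, con_subset_con]
  exact ⟨Finset.Subset.refl _, Finset.singleton_subset_iff.mpr
    (cl_mem_flag_of_facet hσ (Finset.nonempty_of_ne_empty hne))⟩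

lemma faceFlag_companion (σ : Finset (E ⊕ Finset E)) :
    faceFlag (f.companion σ) = faceFlag σ := by
  rw [companion, faceFlag_con]

/-- The key step extracted from the shelling `l`: purity for the "link" of
`(pickIndep F, {F})`. -/
lemma link_step (hl : IsShelling f.augBergman l) {F : Finset E} (hF : f.cl F = F)
    {σ τ : Finset (E ⊕ Finset E)}
    (hσ : IsFacet f.augBergman σ) (hτ : IsFacet f.augBergman τ)
    (hσF : con (f.pickIndep F) {F} ⊆ σ) (hτF : con (f.pickIndep F) {F} ⊆ τ)
    (hord : l.idxOf τ < l.idxOf σ) {D : Finset (Finset E)}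
    (hD : D ⊆ faceFlag σ) (hDτ : D ⊆ faceFlag τ) :
    ∃ G ∈ faceFlag σ, G ≠ F ∧ G ∉ D ∧ ∃ ρ, IsFacet f.augBergman ρ ∧
      con (f.pickIndep F) {F} ⊆ ρ ∧ l.idxOf ρ < l.idxOf σ ∧
      (faceFlag σ).erase G ⊆ faceFlag ρ := by
  obtain ⟨hnd, hmem, hpur⟩ := hl
  have hσl : σ ∈ l := (hmem σ).mpr hσ
  have hτl : τ ∈ l := (hmem τ).mpr hτ
  set k := l.idxOf σ with hkdef
  have hk : k < l.length := List.idxOf_lt_length_iff.mpr hσl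
  have hjτ : l.idxOf τ < l.length := List.idxOf_lt_length_iff.mpr hτl
  have hgk : l[k] = σ := List.getElem_idxOf hk
  have hτtake : τ ∈ l.take k :=
    (mem_take_iff' hk.le).mpr ⟨l.idxOf τ, hjτ, hord, List.getElem_idxOf hjτ⟩
  have hkpos : 0 < k := Nat.pos_of_ne_zero (fun h => by omega)
  have hpure := hpur k hk hkpos
  rw [hgk] at hpure
  set Γ : Set (Finset (E ⊕ Finset E)) :=
    ({t | ∃ s ∈ l.take k, t ⊆ s} ∩ {t | t ⊆ σ}) with hΓdef
  set u0 : Finset (E ⊕ Finset E) := con (f.pickIndep F) (insert F D) with hu0def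
  have hu0σ : u0 ⊆ σ := by
    intro v hv
    rw [hu0def] at hv
    cases v with
    | inl a => exact hσF (mem_con_inl.mpr (mem_con_inl.mp hv))
    | inr G =>
      rcases Finset.mem_insert.mp (mem_con_inr.mp hv) with rfl | hG
      · exact hσF (mem_con_inr.mpr (Finset.mem_singleton_self _))
      · exact mem_faceFlag.mp (hD hG)
  have hu0τ : u0 ⊆ τ := by
    intro v hv
    rw [hu0def] at hv
    cases v with
    | inl a => exact hτF (mem_con_inl.mpr (mem_con_inl.mp hv))
    | inr G =>
      rcases Finset.mem_insert.mp (mem_con_inr.mp hv) with rfl | hG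
      · exact hτF (mem_con_inr.mpr (Finset.mem_singleton_self _))
      · exact mem_faceFlag.mp (hDτ hG)
  have hu0Γ : u0 ∈ Γ := ⟨⟨τ, hτtake, hu0τ⟩, hu0σ⟩
  obtain ⟨w, hwfac, hw0⟩ := exists_facet_superset hu0Γ
  have hwcard : (w.card : ℤ) = (σ.card : ℤ) - 2 + 1 := hpure.2 w hwfac
  have hwσ : w ⊆ σ := hwfac.1.2
  have hcard : w.card + 1 = σ.card := by
    have := Finset.card_le_card hwσ
    omega
  have hsdiff : (σ \ w).card = 1 := by
    rw [Finset.card_sdiff_of_subset hwσ]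
    omega
  obtain ⟨v, hv⟩ := Finset.card_eq_one.mp hsdiff
  have hvσ : v ∈ σ := (Finset.mem_sdiff.mp (hv ▸ Finset.mem_singleton_self v)).1
  have hvw : v ∉ w := (Finset.mem_sdiff.mp (hv ▸ Finset.mem_singleton_self v)).2
  have hweq : w = σ.erase v := by
    apply Finset.eq_of_subset_of_card_le
    · intro x hx
      exact Finset.mem_erase.mpr ⟨fun hxv => hvw (hxv ▸ hx), hwσ hx⟩
    · rw [Finset.card_erase_of_mem hvσ]
      omega
  have hIσ : faceIndep σ = f.pickIndep F :=
    faceIndep_eq_of_facet_above hσ (pickIndep_indep hF) (pickIndep_cl hF) hσF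
  have hvinr : ∃ G, v = Sum.inr G := by
    cases v with
    | inl a =>
      exfalso
      have : a ∈ faceIndep σ := mem_faceIndep.mpr hvσ
      rw [hIσ] at this
      exact hvw (hw0 (by rw [hu0def]; exact mem_con_inl.mpr this))
    | inr G => exact ⟨G, rfl⟩
  obtain ⟨G, rfl⟩ := hvinr
  have hGflag : G ∈ faceFlag σ := mem_faceFlag.mpr hvσ
  have hGnotin : G ∉ insert F D := by
    intro hGin
    exact hvw (hw0 (by rw [hu0def]; exact mem_con_inr.mpr hGin))
  obtain ⟨ρ, hρtake, hwρ⟩ := hwfac.1.1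
  have hρl : ρ ∈ l := List.mem_of_mem_take hρtake
  have hρfac : IsFacet f.augBergman ρ := (hmem ρ).mp hρl
  obtain ⟨j, hj, hjk, hgj⟩ := (mem_take_iff' hk.le).mp hρtake
  have hρidx : l.idxOf ρ < k := by
    have := indexOf_getElem_le l j hj
    rw [hgj] at this
    omega
  refine ⟨G, hGflag, fun h => hGnotin (h ▸ Finset.mem_insert_self F D),
    fun h => hGnotin (Finset.mem_insert_of_mem h), ρ, hρfac, ?_, hρidx, ?_⟩
  · refine Finset.Subset.trans ?_ (hw0.trans hwρ)
    rw [hu0def, con_subset_con]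
    exact ⟨Finset.Subset.refl _, Finset.singleton_subset_iff.mpr (Finset.mem_insert_self F D)⟩
  · have : (faceFlag σ).erase G = faceFlag w := by
      rw [hweq, faceFlag_erase_inr]
    rw [this]
    exact faceFlag_subset hwρ

end ClosureOp
namespace ClosureOp

variable {E : Type*} [Fintype E] [DecidableEq E] {f : ClosureOp E}
variable {l : List (Finset (E ⊕ Finset E))}

set_option linter.unusedSectionVars false

noncomputable def sortedL (f : ClosureOp E) (l : List (Finset (E ⊕ Finset E))) :
    List (Finset (E ⊕ Finset E)) :=
  l.mergeSort (fun a b => decide (f.key l a ≤ f.key l b))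

lemma sortedL_perm : List.Perm (sortedL f l) l := List.mergeSort_perm l _

lemma sortedL_nodup (hl : IsShelling f.augBergman l) : (sortedL f l).Nodup :=
  (sortedL_perm.nodup_iff).mpr hl.1

lemma sortedL_mem (hl : IsShelling f.augBergman l) (s : Finset (E ⊕ Finset E)) :
    s ∈ sortedL f l ↔ IsFacet f.augBergman s :=
  sortedL_perm.mem_iff.trans (hl.2.1 s)

lemma sortedL_sorted :
    (sortedL f l).Pairwise (fun a b => f.key l a ≤ f.key l b) := by
  have h := List.pairwise_mergeSort (le := fun a b => decide (f.key l a ≤ f.key l b))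
    (fun a b c hab hbc => by
      simp only [decide_eq_true_eq] at *
      omega)
    (fun a b => by
      simp only [Bool.or_eq_true, decide_eq_true_eq]
      omega)
    l
  exact h.imp (fun h' => by simpa using h')

/-- Distinct facets have distinct keys. -/
lemma key_inj (hl : IsShelling f.augBergman l) {s t : Finset (E ⊕ Finset E)}
    (hs : IsFacet f.augBergman s) (ht : IsFacet f.augBergman t)
    (h : f.key l s = f.key l t) : s = t := by
  by_cases hfs : faceFlag s = ∅ <;> by_cases hft : faceFlag t = ∅
  · rw [key_basis hfs, key_basis hft] at h
    have h2 : iotaI (faceIndep s) = iotaI (faceIndep t) := by omega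
    have h3 := iotaI_inj h2
    rw [← con_decomp s, ← con_decomp t, hfs, hft, h3]
  · exact absurd h (by have := key_nonbasis_lt_basis (f := f) (l := l) hft hfs; omega)
  · exact absurd h (by have := key_nonbasis_lt_basis (f := f) (l := l) hfs hft; omega)
  · -- both non-basis
    have hns : ¬ f.key l s < f.key l t := by omega
    have hnt : ¬ f.key l t < f.key l s := by omega
    rw [key_lt_iff_nonbasis hfs hft] at hns
    rw [key_lt_iff_nonbasis hft hfs] at hnt
    push_neg at hns hnt
    have ha : (f.cl (faceIndep s)).card = (f.cl (faceIndep t)).card := by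
      have := hns.1; have := hnt.1; omega
    have hb : iotaI (faceIndep s) = iotaI (faceIndep t) := by
      have := hns.2 ha; have := hnt.2 ha.symm; omega
    have hc : f.idx2 l s = f.idx2 l t := by
      have := (hns.2 ha).2 hb; have := (hnt.2 ha.symm).2 hb.symm; omega
    have hI : faceIndep s = faceIndep t := iotaI_inj hb
    have hcs : f.companion s ∈ l := (hl.2.1 _).mpr (companion_isFacet hs hfs)
    have hct : f.companion t ∈ l := (hl.2.1 _).mpr (companion_isFacet ht hft)
    have hcomp : f.companion s = f.companion t :=
      (List.idxOf_inj hcs).mp hc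
    have hflag : faceFlag s = faceFlag t := by
      have := congrArg faceFlag hcomp
      rwa [faceFlag_companion, faceFlag_companion] at this
    rw [← con_decomp s, ← con_decomp t, hI, hflag]

lemma sortedL_strict (hl : IsShelling f.augBergman l) {i j : ℕ}
    (hi : i < (sortedL f l).length) (hj : j < (sortedL f l).length) (hij : i < j) :
    f.key l (sortedL f l)[i] < f.key l (sortedL f l)[j] := by
  have hle := List.pairwise_iff_getElem.mp (sortedL_sorted (f := f) (l := l)) i j hi hj hij
  have hne : (sortedL f l)[i] ≠ (sortedL f l)[j] := by
    intro h
    exact absurd (((sortedL_nodup hl).getElem_inj_iff).mp h) (by omega)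
  have hfi : IsFacet f.augBergman (sortedL f l)[i] :=
    (sortedL_mem hl _).mp (List.getElem_mem hi)
  have hfj : IsFacet f.augBergman (sortedL f l)[j] :=
    (sortedL_mem hl _).mp (List.getElem_mem hj)
  rcases lt_or_eq_of_le hle with h | h
  · exact h
  · exact absurd (key_inj hl hfi hfj h) hne

lemma sortedL_take (hl : IsShelling f.augBergman l) {i : ℕ}
    (hi : i < (sortedL f l).length) {τ : Finset (E ⊕ Finset E)} :
    τ ∈ (sortedL f l).take i ↔
      IsFacet f.augBergman τ ∧ f.key l τ < f.key l (sortedL f l)[i] := by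
  constructor
  · intro h
    obtain ⟨j, hj, hji, hgj⟩ := (mem_take_iff' hi.le).mp h
    refine ⟨(sortedL_mem hl _).mp (hgj ▸ List.getElem_mem hj), ?_⟩
    rw [← hgj]
    exact sortedL_strict hl hj hi hji
  · rintro ⟨hfac, hkey⟩
    have hτ : τ ∈ sortedL f l := (sortedL_mem hl τ).mpr hfac
    have hj : (sortedL f l).idxOf τ < (sortedL f l).length := List.idxOf_lt_length_iff.mpr hτ
    have hgj : (sortedL f l)[(sortedL f l).idxOf τ] = τ := List.getElem_idxOf hj
    have hji : (sortedL f l).idxOf τ < i := by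
      rcases Nat.lt_trichotomy ((sortedL f l).idxOf τ) i with h | h | h
      · exact h
      · exfalso
        subst h
        rw [hgj] at hkey
        exact lt_irrefl _ hkey
      · exfalso
        have := sortedL_strict hl hi hj h
        rw [hgj] at this
        omega
    exact (mem_take_iff' hi.le).mpr ⟨_, hj, hji, hgj⟩

end ClosureOp
namespace ClosureOp

variable {E : Type*} [Fintype E] [DecidableEq E] {f : ClosureOp E}
variable {l : List (Finset (E ⊕ Finset E))}

set_option linter.unusedSectionVars false

lemma erase_inl_eq (σ : Finset (E ⊕ Finset E)) (a : E) :
    σ.erase (Sum.inl a) = con ((faceIndep σ).erase a) (faceFlag σ) := by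
  rw [← con_decomp (σ.erase (Sum.inl a)), faceIndep_erase_inl, faceFlag_erase_inl]

lemma erase_inr_eq (σ : Finset (E ⊕ Finset E)) (G : Finset E) :
    σ.erase (Sum.inr G) = con (faceIndep σ) ((faceFlag σ).erase G) := by
  rw [← con_decomp (σ.erase (Sum.inr G)), faceIndep_erase_inr, faceFlag_erase_inr]

/-- Claim 1: for a non-basis facet `σ` and `a ∈ I`, the face `σ \ {y_a}` lies in a
facet with strictly smaller key. -/
lemma erase_inl_step {σ : Finset (E ⊕ Finset E)} (hσ : IsFacet f.augBergman σ)
    (hCne : faceFlag σ ≠ ∅) {a : E} (ha : a ∈ faceIndep σ) :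
    ∃ τ, IsFacet f.augBergman τ ∧ f.key l τ < f.key l σ ∧ σ.erase (Sum.inl a) ⊆ τ := by
  obtain ⟨h1, h2, h3, h4⟩ := mem_augBergman_iff.mp hσ.1
  set I := faceIndep σ with hI
  set C := faceFlag σ with hC
  set G0 := f.cl (I.erase a) with hG0
  have hG0ss : G0 ⊂ f.cl I := cl_ssubset_of_ssubset h1 (Finset.erase_ssubset ha)
  have hG0proper : f.IsProperFlat G0 := by
    refine ⟨f.cl_idem _, fun h => ?_⟩
    exact hG0ss.2 (h ▸ Finset.subset_univ _)
  have ht0 : con (I.erase a) (insert G0 C) ∈ f.augBergman := by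
    rw [con_mem_augBergman_iff]
    refine ⟨h1.subset (Finset.erase_subset _ _), ?_, ?_, ?_⟩
    · intro F hF
      rcases Finset.mem_insert.mp hF with rfl | hF
      · exact hG0proper
      · exact h2 F hF
    · exact chain_insert h3 (fun F hF => Or.inl (hG0ss.1.trans (h4 F hF)))
    · intro F hF
      rcases Finset.mem_insert.mp hF with rfl | hF
      · exact Finset.Subset.refl _
      · exact (f.cl_mono (Finset.erase_subset _ _)).trans (h4 F hF)
  obtain ⟨τ, hτfac, hτsub⟩ := exists_facet_superset ht0
  have hG0τ : G0 ∈ faceFlag τ :=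
    mem_faceFlag.mpr (hτsub (mem_con_inr.mpr (Finset.mem_insert_self _ _)))
  have hτflag : faceFlag τ ≠ ∅ := fun h => by rw [h] at hG0τ; simp at hG0τ
  refine ⟨τ, hτfac, ?_, ?_⟩
  · rw [key_lt_iff_nonbasis hτflag hCne]
    left
    calc (f.cl (faceIndep τ)).card ≤ G0.card :=
          Finset.card_le_card (cl_subset_flag hτfac.1 hG0τ)
      _ < (f.cl I).card := Finset.card_lt_card hG0ss
  · rw [erase_inl_eq, ← hI, ← hC]
    refine Finset.Subset.trans ?_ hτsub
    rw [con_subset_con]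
    exact ⟨Finset.Subset.refl _, Finset.subset_insert _ _⟩

/-- Claim 3: a face of `Γ` whose independent part is all of `I` extends inside `Γ`
to some `σ \ {x_G}`. -/
lemma erase_inr_step (hl : IsShelling f.augBergman l) {σ t τ : Finset (E ⊕ Finset E)}
    (hσ : IsFacet f.augBergman σ) (hCne : faceFlag σ ≠ ∅)
    (ht : t ⊆ σ) (hIt : faceIndep σ ⊆ faceIndep t)
    (hτ : IsFacet f.augBergman τ) (hkey : f.key l τ < f.key l σ) (htτ : t ⊆ τ) :
    ∃ G ∈ faceFlag σ, t ⊆ σ.erase (Sum.inr G) ∧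
      ∃ τ'', IsFacet f.augBergman τ'' ∧ f.key l τ'' < f.key l σ ∧
        σ.erase (Sum.inr G) ⊆ τ'' := by
  obtain ⟨h1, h2, h3, h4⟩ := mem_augBergman_iff.mp hσ.1
  have hft : faceFlag τ ≠ ∅ := by
    intro h
    exact absurd (key_nonbasis_lt_basis (f := f) (l := l) hCne h) (by omega)
  have hIτsub : faceIndep σ ⊆ faceIndep τ :=
    hIt.trans (faceIndep_subset htτ)
  obtain ⟨g1, g2, g3, g4⟩ := mem_augBergman_iff.mp hτ.1
  have hIτ : faceIndep τ = faceIndep σ := by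
    by_contra hne
    have hss : faceIndep σ ⊂ faceIndep τ := Finset.ssubset_iff_subset_ne.mpr
      ⟨hIτsub, fun h => hne h.symm⟩
    have hclss := cl_ssubset_of_ssubset g1 hss
    have : f.key l σ < f.key l τ := by
      rw [key_lt_iff_nonbasis hCne hft]
      exact Or.inl (Finset.card_lt_card hclss)
    omega
  have hidx : f.idx2 l τ < f.idx2 l σ := by
    rw [key_lt_iff_nonbasis hft hCne, hIτ] at hkey
    rcases hkey with h | ⟨-, h | ⟨-, h⟩⟩
    · exact absurd h (lt_irrefl _)
    · exact absurd h (lt_irrefl _)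
    · exact h
  set F₁ := f.cl (faceIndep σ) with hF₁
  have hF₁flat : f.cl F₁ = F₁ := f.cl_idem _
  have hcσf := companion_isFacet hσ hCne
  have hcσcont := companion_contains hσ hCne
  have hcτf := companion_isFacet hτ hft
  have hcτcont := companion_contains hτ hft
  rw [hIτ] at hcτcont
  have hcompτ : f.companion τ = con (f.pickIndep F₁) (faceFlag τ) := by
    rw [companion, hIτ]
  have hord : l.idxOf (f.companion τ) < l.idxOf (f.companion σ) := hidx
  have hD : faceFlag t ⊆ faceFlag (f.companion σ) := by
    rw [faceFlag_companion]; exact faceFlag_subset ht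
  have hDτ : faceFlag t ⊆ faceFlag (f.companion τ) := by
    rw [faceFlag_companion]; exact faceFlag_subset htτ
  obtain ⟨G, hGmem, hGF, hGD, ρ, hρfac, hρcont, hρidx, hρflag⟩ :=
    link_step hl hF₁flat hcσf hcτf hcσcont hcτcont hord hD hDτ
  rw [faceFlag_companion] at hGmem hρflag
  have hρIeq : faceIndep ρ = f.pickIndep F₁ :=
    faceIndep_eq_of_facet_above hρfac (pickIndep_indep hF₁flat) (pickIndep_cl hF₁flat) hρcont
  have hρcon : con (f.pickIndep F₁) (faceFlag ρ) = ρ := by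
    rw [← hρIeq]; exact con_decomp ρ
  have hF₁ρ : F₁ ∈ faceFlag ρ :=
    mem_faceFlag.mpr (hρcont (mem_con_inr.mpr (Finset.mem_singleton_self _)))
  have hfacτ'' : IsFacet f.augBergman (con (faceIndep σ) (faceFlag ρ)) := by
    refine isFacet_swap ?_ ⟨F₁, hF₁ρ⟩ h1 (pickIndep_cl hF₁flat).symm
    rw [hρcon]; exact hρfac
  have hflagτ'' : faceFlag (con (faceIndep σ) (faceFlag ρ)) ≠ ∅ := by
    rw [faceFlag_con]
    exact fun h => by rw [h] at hF₁ρ; simp at hF₁ρ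
  have hcompτ'' : f.companion (con (faceIndep σ) (faceFlag ρ)) = ρ := by
    rw [companion, faceIndep_con, faceFlag_con, ← hF₁, hρcon]
  refine ⟨G, hGmem, Finset.subset_erase.mpr ⟨ht, fun hmem => hGD (mem_faceFlag.mpr hmem)⟩,
    con (faceIndep σ) (faceFlag ρ), hfacτ'', ?_, ?_⟩
  · rw [key_lt_iff_nonbasis hflagτ'' hCne, faceIndep_con]
    refine Or.inr ⟨rfl, Or.inr ⟨rfl, ?_⟩⟩
    show l.idxOf (f.companion _) < l.idxOf (f.companion σ)
    rw [hcompτ'']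
    exact hρidx
  · rw [erase_inr_eq, con_subset_con]
    exact ⟨Finset.Subset.refl _, hρflag⟩

end ClosureOp
namespace ClosureOp

variable {E : Type*} [Fintype E] [DecidableEq E] {f : ClosureOp E}
variable {l : List (Finset (E ⊕ Finset E))}

set_option linter.unusedSectionVars false

lemma purity_step (hl : IsShelling f.augBergman l) (hU : f.cl ∅ ≠ Finset.univ)
    {i : ℕ} (hi : i < (sortedL f l).length) (hpos : 0 < i) :
    IsPureDim ({t | ∃ s ∈ (sortedL f l).take i, t ⊆ s} ∩ {t | t ⊆ (sortedL f l)[i]})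
      (((sortedL f l)[i].card : ℤ) - 2) := by
  set L := sortedL f l with hL
  set σ := L[i] with hσ
  have hσfac : IsFacet f.augBergman σ := (sortedL_mem hl _).mp (List.getElem_mem hi)
  have h0len : 0 < L.length := by omega
  have hMemΓ : ∀ t : Finset (E ⊕ Finset E),
      t ∈ ({t | ∃ s ∈ L.take i, t ⊆ s} ∩ {t | t ⊆ σ} : Set _) ↔
      ((∃ τ, (IsFacet f.augBergman τ ∧ f.key l τ < f.key l σ) ∧ t ⊆ τ) ∧ t ⊆ σ) := by
    intro t
    constructor
    · rintro ⟨⟨τ, hτtake, htτ⟩, htσ⟩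
      obtain ⟨hτfac, hτkey⟩ := (sortedL_take hl hi).mp hτtake
      exact ⟨⟨τ, ⟨hτfac, hτkey⟩, htτ⟩, htσ⟩
    · rintro ⟨⟨τ, ⟨hτfac, hτkey⟩, htτ⟩, htσ⟩
      exact ⟨⟨τ, (sortedL_take hl hi).mpr ⟨hτfac, hτkey⟩, htτ⟩, htσ⟩
  constructor
  · -- nonempty
    refine ⟨∅, ⟨L[0], ?_, Finset.empty_subset _⟩, Finset.empty_subset _⟩
    exact (mem_take_iff' hi.le).mpr ⟨0, h0len, hpos, rfl⟩
  · -- purity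
    intro w hwfacet
    obtain ⟨⟨τ, ⟨hτfac, hτkey⟩, hwτ⟩, hwσ⟩ := (hMemΓ w).mp hwfacet.1
    have hwne : w ≠ σ := by
      rintro rfl
      have := hσfac.2 τ hτfac.1 hwτ
      rw [← this] at hτkey
      exact lt_irrefl _ hτkey
    by_cases hbasis : faceFlag σ = ∅
    · -- basis facet: intersection is the whole boundary
      have hσI : f.Indep (faceIndep σ) := (mem_augBergman_iff.mp hσfac.1).1
      have hcl : f.cl (faceIndep σ) = Finset.univ :=
        cl_eq_univ_of_facet_flag_empty hσfac hbasis
      have hwss : w ⊂ σ := Finset.ssubset_iff_subset_ne.mpr ⟨hwσ, hwne⟩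
      obtain ⟨v, hvσ, hvw⟩ := Finset.exists_of_ssubset hwss
      obtain ⟨b, rfl⟩ : ∃ b, v = Sum.inl b := by
        cases v with
        | inl b => exact ⟨b, rfl⟩
        | inr G =>
          exfalso
          have : G ∈ faceFlag σ := mem_faceFlag.mpr hvσ
          rw [hbasis] at this
          simp at this
      have hb : b ∈ faceIndep σ := mem_faceIndep.mpr hvσ
      have hJind : f.Indep ((faceIndep σ).erase b) := hσI.subset (Finset.erase_subset _ _)
      have hG0ss : f.cl ((faceIndep σ).erase b) ⊂ f.cl (faceIndep σ) :=
        cl_ssubset_of_ssubset hσI (Finset.erase_ssubset hb)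
      have hG0proper : f.IsProperFlat (f.cl ((faceIndep σ).erase b)) := by
        refine ⟨f.cl_idem _, fun h => ?_⟩
        exact hG0ss.2 (h ▸ Finset.subset_univ _)
      have ht0 : con ((faceIndep σ).erase b) {f.cl ((faceIndep σ).erase b)} ∈
          f.augBergman := by
        rw [con_mem_augBergman_iff]
        refine ⟨hJind, ?_, ?_, ?_⟩
        · intro F hF
          rw [Finset.mem_singleton] at hF
          subst hF
          exact hG0proper
        · intro F hF G hG
          rw [Finset.mem_singleton] at hF hG
          subst hF; subst hG; left; exact Finset.Subset.refl _
        · intro F hF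
          rw [Finset.mem_singleton] at hF
          subst hF
          exact Finset.Subset.refl _
      obtain ⟨τ', hτ'fac, hτ'sub⟩ := exists_facet_superset ht0
      have hτ'flag : faceFlag τ' ≠ ∅ := by
        intro h
        have : f.cl ((faceIndep σ).erase b) ∈ faceFlag τ' :=
          mem_faceFlag.mpr (hτ'sub (mem_con_inr.mpr (Finset.mem_singleton_self _)))
        rw [h] at this
        simp at this
      have herase_mem : σ.erase (Sum.inl b) ∈
          ({t | ∃ s ∈ L.take i, t ⊆ s} ∩ {t | t ⊆ σ} : Set _) := by
        rw [hMemΓ]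
        refine ⟨⟨τ', ⟨hτ'fac, key_nonbasis_lt_basis hτ'flag hbasis⟩, ?_⟩,
          Finset.erase_subset _ _⟩
        rw [erase_inl_eq, hbasis]
        refine Finset.Subset.trans ?_ hτ'sub
        rw [con_subset_con]
        exact ⟨Finset.Subset.refl _, Finset.empty_subset _⟩
      have hweq : w = σ.erase (Sum.inl b) := by
        refine hwfacet.2 _ herase_mem (Finset.subset_erase.mpr ⟨hwσ, hvw⟩)
      rw [hweq, Finset.card_erase_of_mem hvσ]
      have : 0 < σ.card := Finset.card_pos.mpr ⟨_, hvσ⟩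
      push_cast
      omega
    · -- non-basis facet
      by_cases hsub : faceIndep σ ⊆ faceIndep w
      · obtain ⟨G, hG, hwsub, τ'', hτ''fac, hτ''key, hτ''sub⟩ :=
          erase_inr_step hl hσfac hbasis hwσ hsub hτfac hτkey hwτ
        have hGσ : Sum.inr G ∈ σ := mem_faceFlag.mp hG
        have herase_mem : σ.erase (Sum.inr G) ∈
            ({t | ∃ s ∈ L.take i, t ⊆ s} ∩ {t | t ⊆ σ} : Set _) := by
          rw [hMemΓ]
          exact ⟨⟨τ'', ⟨hτ''fac, hτ''key⟩, hτ''sub⟩, Finset.erase_subset _ _⟩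
        have hweq : w = σ.erase (Sum.inr G) := hwfacet.2 _ herase_mem hwsub
        rw [hweq, Finset.card_erase_of_mem hGσ]
        have : 0 < σ.card := Finset.card_pos.mpr ⟨_, hGσ⟩
        push_cast
        omega
      · obtain ⟨a, ha, haw⟩ := Finset.not_subset.mp hsub
        obtain ⟨τ', hτ'fac, hτ'key, hτ'sub⟩ :=
          erase_inl_step (l := l) hσfac hbasis ha
        have haσ : Sum.inl a ∈ σ := mem_faceIndep.mp ha
        have herase_mem : σ.erase (Sum.inl a) ∈
            ({t | ∃ s ∈ L.take i, t ⊆ s} ∩ {t | t ⊆ σ} : Set _) := by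
          rw [hMemΓ]
          exact ⟨⟨τ', ⟨hτ'fac, hτ'key⟩, hτ'sub⟩, Finset.erase_subset _ _⟩
        have hweq : w = σ.erase (Sum.inl a) := by
          refine hwfacet.2 _ herase_mem (Finset.subset_erase.mpr
            ⟨hwσ, fun hmem => haw (mem_faceIndep.mpr hmem)⟩)
        rw [hweq, Finset.card_erase_of_mem haσ]
        have : 0 < σ.card := Finset.card_pos.mpr ⟨_, haσ⟩
        push_cast
        omega

theorem main_construction (hl : IsShelling f.augBergman l)
    (hU : f.cl ∅ ≠ Finset.univ) :
    IsShelling f.augBergman (sortedL f l) ∧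
    PrefixProp (sortedL f l) (fun s => ∀ v ∈ s, ∃ F : Finset E, v = Sum.inr F) ∧
    SuffixProp (sortedL f l) (fun s => ∀ v ∈ s, ∃ a : E, v = Sum.inl a) := by
  refine ⟨⟨sortedL_nodup hl, sortedL_mem hl, fun i hi hpos => purity_step hl hU hi hpos⟩,
    ?_, ?_⟩
  · -- PrefixProp
    intro i j hi hj hij hPj
    have hfi : IsFacet f.augBergman (sortedL f l)[i] :=
      (sortedL_mem hl _).mp (List.getElem_mem hi)
    have hfj : IsFacet f.augBergman (sortedL f l)[j] :=
      (sortedL_mem hl _).mp (List.getElem_mem hj)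
    have hIj : faceIndep (sortedL f l)[j] = ∅ := by
      rw [Finset.eq_empty_iff_forall_notMem]
      intro a ha
      obtain ⟨F, hF⟩ := hPj _ (mem_faceIndep.mp ha)
      exact absurd hF (by simp)
    have hflagj : faceFlag (sortedL f l)[j] ≠ ∅ := by
      intro h
      have := cl_eq_univ_of_facet_flag_empty hfj h
      rw [hIj] at this
      exact hU this
    have hkey := sortedL_strict hl hi hj hij
    have hflagi : faceFlag (sortedL f l)[i] ≠ ∅ := by
      intro h
      have := key_nonbasis_lt_basis (f := f) (l := l) hflagj h
      omega
    have hcard : (f.cl (faceIndep (sortedL f l)[i])).card ≤ (f.cl ∅).card := by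
      rw [key_lt_iff_nonbasis hflagi hflagj, hIj] at hkey
      rcases hkey with h | ⟨h, -⟩
      · omega
      · omega
    have hclsub : f.cl ∅ ⊆ f.cl (faceIndep (sortedL f l)[i]) :=
      f.cl_mono (Finset.empty_subset _)
    have hcleq : f.cl (faceIndep (sortedL f l)[i]) = f.cl ∅ :=
      (Finset.eq_of_subset_of_card_le hclsub hcard).symm
    have hIi : faceIndep (sortedL f l)[i] = ∅ :=
      indep_eq_empty_of_cl (mem_augBergman_iff.mp hfi.1).1 hcleq
    intro v hv
    cases v with
    | inl a =>
      exfalso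
      have : a ∈ faceIndep (sortedL f l)[i] := mem_faceIndep.mpr hv
      rw [hIi] at this
      simp at this
    | inr F => exact ⟨F, rfl⟩
  · -- SuffixProp
    intro i j hi hj hij hQi
    have hfi : IsFacet f.augBergman (sortedL f l)[i] :=
      (sortedL_mem hl _).mp (List.getElem_mem hi)
    have hfj : IsFacet f.augBergman (sortedL f l)[j] :=
      (sortedL_mem hl _).mp (List.getElem_mem hj)
    have hflagi : faceFlag (sortedL f l)[i] = ∅ := by
      rw [Finset.eq_empty_iff_forall_notMem]
      intro F hF
      obtain ⟨a, ha⟩ := hQi _ (mem_faceFlag.mp hF)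
      exact absurd ha (by simp)
    have hkey := sortedL_strict hl hi hj hij
    have hflagj : faceFlag (sortedL f l)[j] = ∅ := by
      by_contra h
      have := key_nonbasis_lt_basis (f := f) (l := l) h hflagi
      omega
    intro v hv
    cases v with
    | inl a => exact ⟨a, rfl⟩
    | inr F =>
      exfalso
      have : F ∈ faceFlag (sortedL f l)[j] := mem_faceFlag.mpr hv
      rw [hflagj] at this
      simp at this

lemma face_eq_empty_of_cl_univ (hU : f.cl ∅ = Finset.univ)
    {s : Finset (E ⊕ Finset E)} (hs : s ∈ f.augBergman) : s = ∅ := by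
  obtain ⟨h1, h2, h3, h4⟩ := mem_augBergman_iff.mp hs
  have hI : faceIndep s = ∅ := by
    rw [Finset.eq_empty_iff_forall_notMem]
    intro a ha
    have h5 := h1 a ha
    refine h5.2 ?_
    have : f.cl ((faceIndep s).erase a) = Finset.univ := by
      have := f.cl_mono (Finset.empty_subset ((faceIndep s).erase a))
      rw [hU] at this
      exact Finset.univ_subset_iff.mp this
    rw [this]
    exact Finset.subset_univ _
  have hC : faceFlag s = ∅ := by
    rw [Finset.eq_empty_iff_forall_notMem]
    intro F hF
    refine (h2 F hF).2 (Finset.univ_subset_iff.mp ?_)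
    have := h4 F hF
    rw [hI, hU] at this
    exact this
  rw [← con_decomp s, hI, hC]
  simp [con]

lemma trivial_case (hl : IsShelling f.augBergman l) (hU : f.cl ∅ = Finset.univ) :
    PrefixProp l (fun s => ∀ v ∈ s, ∃ F : Finset E, v = Sum.inr F) ∧
    SuffixProp l (fun s => ∀ v ∈ s, ∃ a : E, v = Sum.inl a) := by
  have heq : ∀ (i : ℕ) (hi : i < l.length), l[i] = ∅ := by
    intro i hi
    have : IsFacet f.augBergman l[i] := (hl.2.1 _).mp (List.getElem_mem hi)
    exact face_eq_empty_of_cl_univ hU this.1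
  have hlen : ∀ i j (hi : i < l.length) (hj : j < l.length), i < j → False := by
    intro i j hi hj hij
    have h1 : l[i] = l[j] := by rw [heq i hi, heq j hj]
    have := (hl.1.getElem_inj_iff).mp h1
    omega
  exact ⟨fun i j hi hj hij _ => absurd (hlen i j hi hj hij) (fun h => h),
    fun i j hi hj hij _ => absurd (hlen i j hi hj hij) (fun h => h)⟩

end ClosureOp

/-- The augmented Bergman complex of a closure operator is shellable
if and only if it admits a flag-to-basis shelling: a shelling order in which the facets
corresponding to maximal flags (those all of whose vertices are of flat type
`x_F = Sum.inr F`) appear first and the facets corresponding to bases (those all of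
whose vertices are of ground-set type `y_a = Sum.inl a`) appear last. -/
theorem augBergman_shellable_iff_flag_to_basis
    {E : Type*} [Fintype E] [DecidableEq E] (f : ClosureOp E) :
    Shellable f.augBergman ↔
      ∃ l : List (Finset (E ⊕ Finset E)),
        IsShelling f.augBergman l ∧
        PrefixProp l (fun s => ∀ v ∈ s, ∃ F : Finset E, v = Sum.inr F) ∧
        SuffixProp l (fun s => ∀ v ∈ s, ∃ a : E, v = Sum.inl a) := by
  constructor
  · rintro ⟨l, hl⟩
    by_cases hU : f.cl ∅ = Finset.univ
    · exact ⟨l, hl, (ClosureOp.trivial_case hl hU).1, (ClosureOp.trivial_case hl hU).2⟩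
    · obtain ⟨h1, h2, h3⟩ := ClosureOp.main_construction hl hU
      exact ⟨_, h1, h2, h3⟩
  · rintro ⟨l, hl, -, -⟩
    exact ⟨l, hl⟩
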